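/- The function H̃ is concave in the pair (γ, 1/k) in the following sense: for all positive integers k₁, k₂, k₃, all γ₁, γ₂, γ₃ ∈ [0,1], and all α ∈ [0,1] such that α·γ₁ + (1−α)·γ₃ = γ₂ and α·(1/k₁) + (1−α)·(1/k₃) = 1/k₂, one has α·H̃(γ₁, 1/k₁) + (1−α)·H̃(γ₃, 1/k₃) ≤ H̃(γ₂, 1/k₂). -/

import Mathlib

/-- Shannon entropy (in bits) of a pmf on `{0,1,…,k}`, with the convention
`0 · log₂ 0 = 0` (automatic since `Real.logb 2 0 = 0`). -/
noncomputable def shannonEntropy (k : ℕ) (p : ℕ → ℝ) : ℝ :=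
  -∑ i ∈ Finset.range (k + 1), p i * Real.logb 2 (p i)

/-- `H̃(γ, 1/k)`: `(1/k)` times the supremum of the entropies of pmfs on `{0,…,k}`
with mean `kγ`. -/
noncomputable def Htilde (k : ℕ) (γ : ℝ) : ℝ :=
  (1 / (k : ℝ)) * sSup { h : ℝ | ∃ p : ℕ → ℝ,
    (∀ i ∈ Finset.range (k + 1), 0 ≤ p i) ∧
    (∑ i ∈ Finset.range (k + 1), p i = 1) ∧
    (∑ i ∈ Finset.range (k + 1), (i : ℝ) * p i = (k : ℝ) * γ) ∧
    h = shannonEntropy k p }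

/-! For every `x > 0`, Gibbs' inequality against the geometric distribution `i ↦ x ^ i / Z_k(x)`,
`Z_k(x) = 1 + x + ⋯ + x ^ k`, bounds the entropy of any distribution on `{0, …, k}` with mean `m`
by `-m log₂ x + log₂ Z_k(x)`, with equality for the geometric distribution itself; when
`0 < m < k` some `x` gives it mean `m`. Since `log Z_k(x)` is concave in `k` (up to terms affine
in `k` it is `log (1 - exp ((k + 1) log x))` or its mirror image under `x ↦ x⁻¹`), the maximal
entropy `maxEntropy k m` is jointly concave in `(k, m)`, and `H̃(γ, 1/k)` is its perspective
`maxEntropy k (kγ) / k`. At `m ∈ {0, k}` only point masses are feasible and `maxEntropy` vanishes. -/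

open Real Finset

lemma mul_log_sub_mul_log_le {p q : ℝ} (hp : 0 ≤ p) (hq : 0 < q) :
    p * log q - p * log p ≤ q - p := by
  rcases hp.eq_or_lt with rfl | hp
  · simpa using hq.le
  have h := log_le_sub_one_of_pos (div_pos hq hp)
  rw [log_div hq.ne' hp.ne'] at h
  calc p * log q - p * log p = p * (log q - log p) := by ring
    _ ≤ p * (q / p - 1) := mul_le_mul_of_nonneg_left h hp.le
    _ = q - p := by field_simp

theorem shannonEntropy_le_cross_entropy {k : ℕ} {p q : ℕ → ℝ}
    (hp0 : ∀ i ∈ range (k + 1), 0 ≤ p i) (hp1 : ∑ i ∈ range (k + 1), p i = 1)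
    (hq0 : ∀ i ∈ range (k + 1), 0 < q i) (hq1 : ∑ i ∈ range (k + 1), q i = 1) :
    shannonEntropy k p ≤ -∑ i ∈ range (k + 1), p i * logb 2 (q i) := by
  have h : ∑ i ∈ range (k + 1), (p i * log (q i) - p i * log (p i)) ≤ 0 :=
    calc _ ≤ ∑ i ∈ range (k + 1), (q i - p i) :=
          sum_le_sum fun i hi => mul_log_sub_mul_log_le (hp0 i hi) (hq0 i hi)
      _ = 0 := by rw [sum_sub_distrib, hp1, hq1, sub_self]
  rw [shannonEntropy, neg_le_neg_iff]
  simp only [logb, ← mul_div_assoc]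
  rw [← sum_div, ← sum_div, div_le_div_iff_of_pos_right (log_pos one_lt_two)]
  rw [sum_sub_distrib] at h
  linarith

noncomputable def gibbs (k : ℕ) (x : ℝ) (i : ℕ) : ℝ :=
  x ^ i / ∑ j ∈ range (k + 1), x ^ j

section Gibbs

variable {k : ℕ} {x : ℝ}

lemma gibbs_pos (hx : 0 < x) (i : ℕ) : 0 < gibbs k x i :=
  div_pos (pow_pos hx i) (geom_sum_pos hx.le k.succ_ne_zero)

lemma sum_gibbs (hx : 0 < x) : ∑ i ∈ range (k + 1), gibbs k x i = 1 := by
  simp only [gibbs]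
  rw [← sum_div, div_self (geom_sum_pos hx.le k.succ_ne_zero).ne']

lemma cross_entropy_gibbs (hx : 0 < x) {p : ℕ → ℝ} (hp1 : ∑ i ∈ range (k + 1), p i = 1) :
    -∑ i ∈ range (k + 1), p i * logb 2 (gibbs k x i)
      = -(∑ i ∈ range (k + 1), (i : ℝ) * p i) * logb 2 x
        + logb 2 (∑ j ∈ range (k + 1), x ^ j) := by
  have hZ := geom_sum_pos hx.le k.succ_ne_zero
  have h (i : ℕ) : p i * logb 2 (gibbs k x i)
      = i * p i * logb 2 x - p i * logb 2 (∑ j ∈ range (k + 1), x ^ j) := by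
    rw [gibbs, logb_div (pow_pos hx i).ne' hZ.ne', logb_pow]
    ring
  simp only [h, sum_sub_distrib, ← sum_mul, hp1]
  ring

theorem shannonEntropy_le_dual (hx : 0 < x) {p : ℕ → ℝ}
    (hp0 : ∀ i ∈ range (k + 1), 0 ≤ p i) (hp1 : ∑ i ∈ range (k + 1), p i = 1) :
    shannonEntropy k p ≤ -(∑ i ∈ range (k + 1), (i : ℝ) * p i) * logb 2 x
      + logb 2 (∑ j ∈ range (k + 1), x ^ j) :=
  cross_entropy_gibbs hx hp1 ▸
    shannonEntropy_le_cross_entropy hp0 hp1 (fun i _ => gibbs_pos hx i) (sum_gibbs hx)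

theorem shannonEntropy_gibbs (hx : 0 < x) :
    shannonEntropy k (gibbs k x) = -(∑ i ∈ range (k + 1), (i : ℝ) * gibbs k x i) * logb 2 x
      + logb 2 (∑ j ∈ range (k + 1), x ^ j) :=
  cross_entropy_gibbs hx (sum_gibbs hx)

lemma exists_pos_sum_sub_mul_pow_eq_zero {m : ℝ} (hm0 : 0 < m) (hmk : m < k) :
    ∃ x > 0, ∑ i ∈ range (k + 1), ((i : ℝ) - m) * x ^ i = 0 := by
  -- `G y = (1 - y) ^ k * F (y / (1 - y))` for the sum `F` of the claim, and `G` changes sign.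
  set G : ℝ → ℝ := fun y => ∑ i ∈ range (k + 1), ((i : ℝ) - m) * (y ^ i * (1 - y) ^ (k - i))
  have hG : Continuous G := by fun_prop
  have hG0 : G 0 = -m := by simp [G, sum_range_succ']
  have hG1 : G 1 = k - m := by
    rw [show G 1 = _ from sum_range_succ _ k, sum_eq_zero fun i hi => ?_]
    · simp
    · rw [sub_self, zero_pow (by simp at hi; omega), mul_zero, mul_zero]
  obtain ⟨y, ⟨hy0, hy1⟩, hGy⟩ :=
    intermediate_value_Ioo zero_le_one hG.continuousOn
      (show (0 : ℝ) ∈ Set.Ioo (G 0) (G 1) by rw [hG0, hG1]; constructor <;> linarith)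
  refine ⟨y / (1 - y), div_pos hy0 (sub_pos.2 hy1), ?_⟩
  have hy : (1 - y) ^ k ≠ 0 := pow_ne_zero k (sub_pos.2 hy1).ne'
  refine (mul_eq_zero.1 ?_).resolve_right hy
  rw [← hGy, sum_mul]
  refine sum_congr rfl fun i hi => ?_
  rw [div_pow, mul_assoc, div_mul_eq_mul_div, pow_sub₀ _ (sub_pos.2 hy1).ne' (by simp at hi; omega)]
  ring

theorem exists_gibbs_mean_eq {m : ℝ} (hm0 : 0 < m) (hmk : m < k) :
    ∃ x > 0, ∑ i ∈ range (k + 1), (i : ℝ) * gibbs k x i = m := by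
  obtain ⟨x, hx, h⟩ := exists_pos_sum_sub_mul_pow_eq_zero hm0 hmk
  refine ⟨x, hx, ?_⟩
  simp only [sub_mul, sum_sub_distrib, ← mul_sum, sub_eq_zero] at h
  simp only [gibbs, ← mul_div_assoc, ← sum_div, h]
  exact mul_div_cancel_right₀ m (geom_sum_pos hx.le k.succ_ne_zero).ne'

end Gibbs

lemma eq_zero_of_sum_mul_eq_zero {ι : Type*} {s : Finset ι} {w p : ι → ℝ}
    (hw : ∀ i ∈ s, 0 ≤ w i) (hp : ∀ i ∈ s, 0 ≤ p i) (h : ∑ i ∈ s, w i * p i = 0)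
    {i : ι} (hi : i ∈ s) (hwi : w i ≠ 0) : p i = 0 :=
  (mul_eq_zero.1 ((sum_eq_zero_iff_of_nonneg fun j hj => mul_nonneg (hw j hj) (hp j hj)).1 h i hi)
    ).resolve_left hwi

lemma shannonEntropy_eq_zero_of_forall_ne {k j : ℕ} {p : ℕ → ℝ} (hj : j ∈ range (k + 1))
    (hp1 : ∑ i ∈ range (k + 1), p i = 1) (hp : ∀ i ∈ range (k + 1), i ≠ j → p i = 0) :
    shannonEntropy k p = 0 := by
  have hpj : p j = 1 := by rwa [sum_eq_single_of_mem j hj hp] at hp1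
  rw [shannonEntropy, sum_eq_single_of_mem j hj fun i hi hij => by rw [hp i hi hij, zero_mul],
    hpj, logb_one, mul_zero, neg_zero]

def entropySet (k : ℕ) (m : ℝ) : Set ℝ :=
  { h : ℝ | ∃ p : ℕ → ℝ,
    (∀ i ∈ Finset.range (k + 1), 0 ≤ p i) ∧
    (∑ i ∈ Finset.range (k + 1), p i = 1) ∧
    (∑ i ∈ Finset.range (k + 1), (i : ℝ) * p i = m) ∧
    h = shannonEntropy k p }

noncomputable def maxEntropy (k : ℕ) (m : ℝ) : ℝ :=
  sSup (entropySet k m)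

lemma Htilde_eq_maxEntropy (k : ℕ) (γ : ℝ) : Htilde k γ = 1 / k * maxEntropy k (k * γ) :=
  rfl

section MaxEntropy

variable {k : ℕ} {m : ℝ}

lemma entropySet_nonempty (hm : m ∈ Set.Icc 0 (k : ℝ)) : (entropySet k m).Nonempty := by
  set t := m / k
  have ht : t ∈ Set.Icc (0 : ℝ) 1 :=
    ⟨div_nonneg hm.1 k.cast_nonneg, div_le_one_of_le₀ hm.2 k.cast_nonneg⟩
  have hkt : k * t = m := by
    rcases k.eq_zero_or_pos with rfl | hk
    · simpa using (le_antisymm hm.2 (by simpa using hm.1)).symm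
    · exact mul_div_cancel₀ m (Nat.cast_pos.2 hk).ne'
  let p : ℕ → ℝ := fun i => (if i = 0 then 1 - t else 0) + (if i = k then t else 0)
  refine ⟨_, p, fun i _ => ?_, ?_, ?_, rfl⟩
  · have := ht.1; have := ht.2
    dsimp only [p]; split_ifs <;> linarith
  · simp [p, sum_add_distrib]
  · simp [p, mul_add, sum_add_distrib, hkt]

lemma bddAbove_entropySet (k : ℕ) (m : ℝ) : BddAbove (entropySet k m) :=
  ⟨logb 2 (k + 1), by
    rintro _ ⟨p, hp0, hp1, -, rfl⟩
    simpa using shannonEntropy_le_dual one_pos hp0 hp1⟩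

theorem maxEntropy_le_dual (hm : m ∈ Set.Icc 0 (k : ℝ)) {x : ℝ} (hx : 0 < x) :
    maxEntropy k m ≤ -m * logb 2 x + logb 2 (∑ j ∈ range (k + 1), x ^ j) :=
  csSup_le (entropySet_nonempty hm) <| by
    rintro _ ⟨p, hp0, hp1, rfl, rfl⟩
    exact shannonEntropy_le_dual hx hp0 hp1

theorem dual_le_maxEntropy {x : ℝ} (hx : 0 < x)
    (hmean : ∑ i ∈ range (k + 1), (i : ℝ) * gibbs k x i = m) :
    -m * logb 2 x + logb 2 (∑ j ∈ range (k + 1), x ^ j) ≤ maxEntropy k m := by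
  subst hmean
  rw [← shannonEntropy_gibbs hx]
  exact le_csSup (bddAbove_entropySet k _)
    ⟨gibbs k x, fun i _ => (gibbs_pos hx i).le, sum_gibbs hx, rfl, rfl⟩

lemma maxEntropy_eq_zero_of_forall_ne (hm : m ∈ Set.Icc 0 (k : ℝ)) {j : ℕ}
    (hj : j ∈ range (k + 1))
    (h : ∀ p : ℕ → ℝ, (∀ i ∈ range (k + 1), 0 ≤ p i) → ∑ i ∈ range (k + 1), p i = 1 →
      ∑ i ∈ range (k + 1), (i : ℝ) * p i = m → ∀ i ∈ range (k + 1), i ≠ j → p i = 0) :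
    maxEntropy k m = 0 := by
  have : entropySet k m = {0} := (entropySet_nonempty hm).subset_singleton_iff.1 <| by
    rintro _ ⟨p, hp0, hp1, hpm, rfl⟩
    exact shannonEntropy_eq_zero_of_forall_ne hj hp1 (h p hp0 hp1 hpm)
  rw [maxEntropy, this, csSup_singleton]

lemma maxEntropy_zero (k : ℕ) : maxEntropy k 0 = 0 :=
  maxEntropy_eq_zero_of_forall_ne ⟨le_rfl, k.cast_nonneg⟩ (mem_range.2 k.succ_pos)
    fun _ hp0 _ hpm _ hi hi0 =>
      eq_zero_of_sum_mul_eq_zero (fun i _ => i.cast_nonneg) hp0 hpm hi (Nat.cast_ne_zero.2 hi0)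

lemma maxEntropy_self (k : ℕ) : maxEntropy k k = 0 := by
  refine maxEntropy_eq_zero_of_forall_ne ⟨k.cast_nonneg, le_rfl⟩ (mem_range.2 k.lt_succ_self)
    fun p hp0 hp1 hpm i hi hik => ?_
  have hw : ∀ i ∈ range (k + 1), (0 : ℝ) ≤ k - i := fun i hi => by
    simpa using Nat.lt_succ_iff.1 (mem_range.1 hi)
  have hwp : ∑ i ∈ range (k + 1), ((k : ℝ) - i) * p i = 0 := by
    simp only [sub_mul, sum_sub_distrib, ← mul_sum, hp1, hpm, mul_one, sub_self]
  exact eq_zero_of_sum_mul_eq_zero hw hp0 hwp hi (sub_ne_zero.2 (by exact_mod_cast hik.symm))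

lemma mul_maxEntropy_eq_zero_of_mul_eq_zero {c : ℝ} (h : c * m = 0) : c * maxEntropy k m = 0 := by
  rcases mul_eq_zero.1 h with rfl | rfl
  · exact zero_mul _
  · rw [maxEntropy_zero, mul_zero]

lemma mul_maxEntropy_eq_zero_of_mul_sub_eq_zero {c : ℝ} (h : c * (k - m) = 0) :
    c * maxEntropy k m = 0 := by
  rcases mul_eq_zero.1 h with rfl | h
  · exact zero_mul _
  · rw [← sub_eq_zero.1 h, maxEntropy_self, mul_zero]

end MaxEntropy

lemma concaveOn_log_one_sub_exp : ConcaveOn ℝ (Set.Iio 0) fun u => log (1 - exp u) := by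
  have hpos : ∀ u ∈ Set.Iio (0 : ℝ), 1 - exp u ∈ Set.Ioi 0 := fun u hu =>
    sub_pos.2 (exp_lt_one_iff.2 hu)
  refine ⟨convex_Iio 0, fun u hu v hv a b ha hb hab => ?_⟩
  have hexp := convexOn_exp.2 (Set.mem_univ u) (Set.mem_univ v) ha hb hab
  calc a • log (1 - exp u) + b • log (1 - exp v) ≤ log (a • (1 - exp u) + b • (1 - exp v)) :=
        strictConcaveOn_log_Ioi.concaveOn.2 (hpos u hu) (hpos v hv) ha hb hab
    _ ≤ log (1 - exp (a • u + b • v)) := by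
        refine log_le_log (strictConcaveOn_log_Ioi.1 (hpos u hu) (hpos v hv) ha hb hab) ?_
        simp only [smul_eq_mul] at hexp ⊢
        linear_combination hexp + hab

section GeomSum

variable {x : ℝ}

lemma log_geom_sum_of_lt_one (hx0 : 0 < x) (hx1 : x < 1) (k : ℕ) :
    log (∑ i ∈ range (k + 1), x ^ i) = log (1 - exp ((k + 1) * log x)) - log (1 - x) := by
  have hpow : exp ((k + 1) * log x) = x ^ (k + 1) := by
    rw [mul_comm, ← rpow_def_of_pos hx0, ← rpow_natCast]
    push_cast
    rfl
  rw [hpow, geom_sum_eq hx1.ne, ← neg_div_neg_eq, neg_sub, neg_sub,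
    log_div (sub_pos.2 (pow_lt_one₀ hx0.le hx1 k.succ_ne_zero)).ne' (sub_pos.2 hx1).ne']

lemma log_geom_sum_of_one_lt (hx1 : 1 < x) (k : ℕ) :
    log (∑ i ∈ range (k + 1), x ^ i)
      = (k + 1) * log x + log (1 - exp ((k + 1) * log x⁻¹)) - log (x - 1) := by
  have hx0 : 0 < x := zero_lt_one.trans hx1
  have hpow : exp ((k + 1) * log x⁻¹) = (x ^ (k + 1))⁻¹ := by
    rw [mul_comm, ← rpow_def_of_pos (inv_pos.2 hx0), ← rpow_natCast, inv_rpow hx0.le]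
    push_cast
    rfl
  have hxk : 1 < x ^ (k + 1) := one_lt_pow₀ hx1 k.succ_ne_zero
  have hsplit : x ^ (k + 1) - 1 = x ^ (k + 1) * (1 - (x ^ (k + 1))⁻¹) := by
    field_simp
  rw [hpow, geom_sum_eq hx1.ne', hsplit,
    log_div (mul_pos (by positivity) (sub_pos.2 (inv_lt_one_of_one_lt₀ hxk))).ne'
      (sub_pos.2 hx1).ne',
    log_mul (by positivity) (sub_pos.2 (inv_lt_one_of_one_lt₀ hxk)).ne', log_pow]
  push_cast
  ring

theorem weighted_log_geom_sum_le (hx : 0 < x) {β : ℝ} (hβ : β ∈ Set.Icc (0 : ℝ) 1)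
    {k₁ k₂ k₃ : ℕ} (hk : β * k₁ + (1 - β) * k₃ = k₂) :
    β * log (∑ i ∈ range (k₁ + 1), x ^ i) + (1 - β) * log (∑ i ∈ range (k₃ + 1), x ^ i)
      ≤ log (∑ i ∈ range (k₂ + 1), x ^ i) := by
  have hβ' : 0 ≤ 1 - β := sub_nonneg.2 hβ.2
  have hk' : β * (k₁ + 1) + (1 - β) * (k₃ + 1) = (k₂ + 1 : ℝ) := by linear_combination hk
  have key {c : ℝ} (hc : c < 0) :
      β * log (1 - exp ((k₁ + 1) * c)) + (1 - β) * log (1 - exp ((k₃ + 1) * c))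
        ≤ log (1 - exp ((k₂ + 1) * c)) := by
    have h := concaveOn_log_one_sub_exp.2 (x := (k₁ + 1) * c) (y := (k₃ + 1) * c)
      (mul_neg_of_pos_of_neg (by positivity) hc) (mul_neg_of_pos_of_neg (by positivity) hc)
      hβ.1 hβ' (add_sub_cancel β 1)
    have hpt : β * ((k₁ + 1) * c) + (1 - β) * ((k₃ + 1) * c) = (k₂ + 1) * c := by
      linear_combination c * hk'
    simpa only [smul_eq_mul, hpt] using h
  rcases lt_trichotomy x 1 with hx1 | rfl | hx1
  · simp only [log_geom_sum_of_lt_one hx hx1]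
    linear_combination key (log_neg hx hx1)
  · have h := strictConcaveOn_log_Ioi.concaveOn.2 (x := (k₁ + 1 : ℝ)) (y := (k₃ + 1 : ℝ))
      (Set.mem_Ioi.2 (by positivity)) (Set.mem_Ioi.2 (by positivity)) hβ.1 hβ'
      (add_sub_cancel β 1)
    simpa [hk'] using h
  · simp only [log_geom_sum_of_one_lt hx1]
    linear_combination key (log_neg (inv_pos.2 hx) (inv_lt_one_of_one_lt₀ hx1))
      + log x * hk' - log (x - 1) * (add_sub_cancel β 1)

end GeomSum

theorem weighted_maxEntropy_le {k₁ k₂ k₃ : ℕ} {m₁ m₂ m₃ β : ℝ}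
    (hm₁ : m₁ ∈ Set.Icc 0 (k₁ : ℝ)) (hm₃ : m₃ ∈ Set.Icc 0 (k₃ : ℝ)) (hβ : β ∈ Set.Icc (0 : ℝ) 1)
    (hk : β * k₁ + (1 - β) * k₃ = k₂) (hm : β * m₁ + (1 - β) * m₃ = m₂) :
    β * maxEntropy k₁ m₁ + (1 - β) * maxEntropy k₃ m₃ ≤ maxEntropy k₂ m₂ := by
  obtain ⟨hβ0, hβ1⟩ := hβ
  have hβ' : 0 ≤ 1 - β := sub_nonneg.2 hβ1
  have hw₁ := mul_nonneg hβ0 hm₁.1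
  have hw₃ := mul_nonneg hβ' hm₃.1
  have hv₁ := mul_nonneg hβ0 (sub_nonneg.2 hm₁.2)
  have hv₃ := mul_nonneg hβ' (sub_nonneg.2 hm₃.2)
  rcases (show 0 ≤ m₂ by linarith).eq_or_lt with rfl | hm₂0
  · rw [mul_maxEntropy_eq_zero_of_mul_eq_zero (by linarith : β * m₁ = 0),
      mul_maxEntropy_eq_zero_of_mul_eq_zero (by linarith : (1 - β) * m₃ = 0), maxEntropy_zero,
      add_zero]
  rcases (show m₂ ≤ k₂ by linarith).eq_or_lt with rfl | hm₂k
  · rw [mul_maxEntropy_eq_zero_of_mul_sub_eq_zero (by linarith : β * (k₁ - m₁) = 0),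
      mul_maxEntropy_eq_zero_of_mul_sub_eq_zero (by linarith : (1 - β) * (k₃ - m₃) = 0),
      maxEntropy_self, add_zero]
  obtain ⟨x, hx, hmean⟩ := exists_gibbs_mean_eq hm₂0 hm₂k
  have hZ : β * logb 2 (∑ i ∈ range (k₁ + 1), x ^ i)
      + (1 - β) * logb 2 (∑ i ∈ range (k₃ + 1), x ^ i) ≤ logb 2 (∑ i ∈ range (k₂ + 1), x ^ i) := by
    simp only [logb, ← mul_div_assoc, ← add_div]
    exact div_le_div_of_nonneg_right (weighted_log_geom_sum_le hx ⟨hβ0, hβ1⟩ hk)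
      (log_nonneg one_le_two)
  calc β * maxEntropy k₁ m₁ + (1 - β) * maxEntropy k₃ m₃
      ≤ β * (-m₁ * logb 2 x + logb 2 (∑ i ∈ range (k₁ + 1), x ^ i))
        + (1 - β) * (-m₃ * logb 2 x + logb 2 (∑ i ∈ range (k₃ + 1), x ^ i)) := by
        gcongr
        · exact maxEntropy_le_dual hm₁ hx
        · exact maxEntropy_le_dual hm₃ hx
    _ ≤ -m₂ * logb 2 x + logb 2 (∑ i ∈ range (k₂ + 1), x ^ i) := by
        linear_combination hZ - logb 2 x * hm
    _ ≤ maxEntropy k₂ m₂ := dual_le_maxEntropy hx hmean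

lemma exists_perspective_weight {k₁ k₂ k₃ α : ℝ} (hk₁ : 0 < k₁) (hk₂ : 0 < k₂) (hk₃ : 0 < k₃)
    (hα : α ∈ Set.Icc (0 : ℝ) 1) (hk : α * (1 / k₁) + (1 - α) * (1 / k₃) = 1 / k₂) :
    ∃ β ∈ Set.Icc (0 : ℝ) 1, β * k₁ = α * k₂ ∧ (1 - β) * k₃ = (1 - α) * k₂ := by
  obtain ⟨β, hβk₁⟩ : ∃ β : ℝ, β * k₁ = α * k₂ := ⟨α * k₂ / k₁, div_mul_cancel₀ _ hk₁.ne'⟩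
  have hβk₃ : (1 - β) * k₃ = (1 - α) * k₂ := by
    field_simp at hk
    refine mul_right_cancel₀ hk₁.ne' ?_
    linear_combination -k₃ * hβk₁ - hk
  exact ⟨β, ⟨nonneg_of_mul_nonneg_left (hβk₁ ▸ mul_nonneg hα.1 hk₂.le) hk₁,
    sub_nonneg.1 (nonneg_of_mul_nonneg_left (hβk₃ ▸ mul_nonneg (sub_nonneg.2 hα.2) hk₂.le) hk₃)⟩,
    hβk₁, hβk₃⟩

theorem Htilde_concave_in_pair_general
    (k₁ k₂ k₃ : ℕ) (hk₁ : 0 < k₁) (hk₂ : 0 < k₂) (hk₃ : 0 < k₃)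
    (γ₁ γ₂ γ₃ : ℝ)
    (hγ₁ : γ₁ ∈ Set.Icc (0 : ℝ) 1)
    (hγ₃ : γ₃ ∈ Set.Icc (0 : ℝ) 1)
    (α : ℝ) (hα : α ∈ Set.Icc (0 : ℝ) 1)
    (hγ : α * γ₁ + (1 - α) * γ₃ = γ₂)
    (hk : α * (1 / (k₁ : ℝ)) + (1 - α) * (1 / (k₃ : ℝ)) = 1 / (k₂ : ℝ)) :
    α * Htilde k₁ γ₁ + (1 - α) * Htilde k₃ γ₃ ≤ Htilde k₂ γ₂ := by
  have hK₁ : (0 : ℝ) < k₁ := Nat.cast_pos.2 hk₁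
  have hK₂ : (0 : ℝ) < k₂ := Nat.cast_pos.2 hk₂
  have hK₃ : (0 : ℝ) < k₃ := Nat.cast_pos.2 hk₃
  obtain ⟨β, hβ, hβk₁, hβk₃⟩ := exists_perspective_weight hK₁ hK₂ hK₃ hα hk
  have hmem (k : ℕ) {γ : ℝ} (hγ : γ ∈ Set.Icc (0 : ℝ) 1) : k * γ ∈ Set.Icc 0 (k : ℝ) :=
    ⟨mul_nonneg k.cast_nonneg hγ.1, mul_le_of_le_one_right k.cast_nonneg hγ.2⟩
  have hconc := weighted_maxEntropy_le (hmem k₁ hγ₁) (hmem k₃ hγ₃) hβ (k₂ := k₂) (m₂ := k₂ * γ₂)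
    (by linear_combination hβk₁ + hβk₃) (by linear_combination γ₁ * hβk₁ + γ₃ * hβk₃ + k₂ * hγ)
  have e₁ : α * (1 / k₁) = β * (1 / k₂) := by
    field_simp
    linear_combination -hβk₁
  have e₃ : (1 - α) * (1 / k₃) = (1 - β) * (1 / k₂) := by
    field_simp
    linear_combination -hβk₃
  simp only [Htilde_eq_maxEntropy]
  calc α * (1 / k₁ * maxEntropy k₁ (k₁ * γ₁)) + (1 - α) * (1 / k₃ * maxEntropy k₃ (k₃ * γ₃))
      = 1 / k₂ * (β * maxEntropy k₁ (k₁ * γ₁) + (1 - β) * maxEntropy k₃ (k₃ * γ₃)) := by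
        linear_combination maxEntropy k₁ (k₁ * γ₁) * e₁ + maxEntropy k₃ (k₃ * γ₃) * e₃
    _ ≤ 1 / k₂ * maxEntropy k₂ (k₂ * γ₂) := by gcongr

/-- `H̃` is concave in the pair `(γ, 1/k)`: if
`α·(γ₁, 1/k₁) + (1−α)·(γ₃, 1/k₃) = (γ₂, 1/k₂)` with `k₁,k₂,k₃` positive integers,
`γ₁,γ₂,γ₃ ∈ [0,1]` and `α ∈ [0,1]`, then
`α·H̃(γ₁,1/k₁) + (1−α)·H̃(γ₃,1/k₃) ≤ H̃(γ₂,1/k₂)`. -/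
theorem Htilde_concave_in_pair
    (k₁ k₂ k₃ : ℕ) (hk₁ : 0 < k₁) (hk₂ : 0 < k₂) (hk₃ : 0 < k₃)
    (γ₁ γ₂ γ₃ : ℝ)
    (hγ₁ : γ₁ ∈ Set.Icc (0 : ℝ) 1) (hγ₂ : γ₂ ∈ Set.Icc (0 : ℝ) 1)
    (hγ₃ : γ₃ ∈ Set.Icc (0 : ℝ) 1)
    (α : ℝ) (hα : α ∈ Set.Icc (0 : ℝ) 1)
    (hγ : α * γ₁ + (1 - α) * γ₃ = γ₂)
    (hk : α * (1 / (k₁ : ℝ)) + (1 - α) * (1 / (k₃ : ℝ)) = 1 / (k₂ : ℝ)) :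
    α * Htilde k₁ γ₁ + (1 - α) * Htilde k₃ γ₃ ≤ Htilde k₂ γ₂ :=
  Htilde_concave_in_pair_general k₁ k₂ k₃ hk₁ hk₂ hk₃ γ₁ γ₂ γ₃ hγ₁ hγ₃ α hα hγ hk
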